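/- arXiv:math/0306134 — 5 statements merged into one kernel-verified Lean document; each statement's English description precedes it below -/
import Mathlib

section
/- There exist twelve vectors ξ_1, …, ξ_12 in (ℤ/2ℤ)^12 such that for all j ≠ k, the sum over m = 1,…,12 of (-1)^{(ξ_j - ξ_k)·e_m} equals 0, where e_1,…,e_12 is the standard basis of (ℤ/2ℤ)^12; equivalently, the functions x ↦ (-1)^{ξ_j · x} restricted to the 12-element set {e_1,…,e_12} are pairwise orthogonal in ℓ², and hence form an orthogonal basis of ℓ²({e_1,…,e_12}). -/
def xiMat : Fin 12 → (Fin 12 → ZMod 2) :=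
  ![![0,0,0,0,0,0,0,0,0,0,0,0],
    ![0,1,0,1,0,0,0,1,1,1,0,1],
    ![0,1,1,0,1,0,0,0,1,1,1,0],
    ![0,0,1,1,0,1,0,0,0,1,1,1],
    ![0,1,0,1,1,0,1,0,0,0,1,1],
    ![0,1,1,0,1,1,0,1,0,0,0,1],
    ![0,1,1,1,0,1,1,0,1,0,0,0],
    ![0,0,1,1,1,0,1,1,0,1,0,0],
    ![0,0,0,1,1,1,0,1,1,0,1,0],
    ![0,0,0,0,1,1,1,0,1,1,0,1],
    ![0,1,0,0,0,1,1,1,0,1,1,0],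
    ![0,0,1,0,0,0,1,1,1,0,1,1]]

lemma xiMat_sum : ∀ j k : Fin 12, j ≠ k →
    (∑ m : Fin 12, (xiMat j m - xiMat k m).val) = 6 := by decide

lemma neg_one_pow_val (v : ZMod 2) : ((-1 : ℂ) ^ v.val) = 1 - 2 * (v.val : ℂ) := by
  have h : v.val = 0 ∨ v.val = 1 := by
    have := ZMod.val_lt v; omega
  rcases h with h | h <;> rw [h] <;> norm_num

theorem stmt1 :
    ∃ ξ : Fin 12 → (Fin 12 → ZMod 2),
      ∀ j k : Fin 12, j ≠ k →
        ∑ m : Fin 12, ((-1 : ℂ) ^ ((ξ j m - ξ k m).val)) = 0 := by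
  refine ⟨xiMat, ?_⟩
  intro j k h
  have hs := xiMat_sum j k h
  calc ∑ m : Fin 12, ((-1 : ℂ) ^ ((xiMat j m - xiMat k m).val))
      = ∑ m : Fin 12, (1 - 2 * (((xiMat j m - xiMat k m).val : ℕ) : ℂ)) := by
        refine Finset.sum_congr rfl fun m _ => neg_one_pow_val _
    _ = 12 - 2 * ((∑ m : Fin 12, (xiMat j m - xiMat k m).val : ℕ) : ℂ) := by
        rw [Finset.sum_sub_distrib, ← Finset.mul_sum]
        push_cast
        simp
    _ = 0 := by rw [hs]; norm_num
end

section
/- There exists a 6-element subset Ω ⊆ (ℤ/3ℤ)^6 and a 6-element subset Λ ⊆ (ℤ/3ℤ)^6 such that the functions x ↦ ω^{ξ·x} for ξ ∈ Λ, where ω = e^{2πi/3}, are pairwise orthogonal on Ω (i.e., Σ_{x ∈ Ω} ω^{(ξ-ξ')·x} = 0 for distinct ξ, ξ' ∈ Λ), hence form an orthogonal basis of ℓ²(Ω), while Ω does not tile (ℤ/3ℤ)^6 by translations. -/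
open Complex

/-- `Ω` tiles the additive group `G` by translations. -/
def Tiles {G : Type*} [AddCommGroup G] (Ω : Set G) : Prop :=
  ∃ T : Set G, ∀ g : G, ∃! t : G, t ∈ T ∧ g - t ∈ Ω

noncomputable def ω : ℂ := Complex.exp (2 * Real.pi * Complex.I / 3)

/-- standard basis vectors -/
def ee : Fin 6 → (Fin 6 → ZMod 3) := fun i j => if j = i then 1 else 0

/-- rows of a Butson Hadamard matrix BH(6,3) -/
def M : Fin 6 → Fin 6 → ZMod 3 :=
  ![![0,0,0,0,0,0], ![0,0,1,1,2,2], ![0,1,0,2,1,2],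
    ![0,1,2,0,2,1], ![0,2,1,2,0,1], ![0,2,2,1,1,0]]

lemma omega_sum : 1 + ω + ω ^ 2 = 0 := by
  have h := Complex.isPrimitiveRoot_exp 3 (by norm_num)
  have := h.geom_sum_eq_zero (by norm_num)
  rw [Finset.sum_range_succ, Finset.sum_range_succ, Finset.sum_range_one] at this
  simpa [ω, pow_one] using this

lemma sumpow (d : Fin 6 → ZMod 3)
    (h : ∀ c : ZMod 3, (Finset.univ.filter fun i => d i = c).card = 2) :
    ∑ i : Fin 6, ω ^ (d i).val = 0 := by
  have := Finset.sum_fiberwise (Finset.univ : Finset (Fin 6)) d (fun i => ω ^ (d i).val)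
  rw [← this]
  have : ∀ c : ZMod 3, (∑ i ∈ Finset.univ.filter fun i => d i = c, ω ^ (d i).val)
      = 2 * ω ^ c.val := by
    intro c
    rw [Finset.sum_congr rfl (fun i hi => by
      rw [(Finset.mem_filter.mp hi).2]), Finset.sum_const, h c]
    ring
  rw [Finset.sum_congr rfl (fun c _ => this c)]
  have h0 : ((0 : ZMod 3)).val = 0 := rfl
  have h1 : ((1 : ZMod 3)).val = 1 := rfl
  have h2 : ((2 : ZMod 3)).val = 2 := rfl
  rw [show (Finset.univ : Finset (ZMod 3)) = {0, 1, 2} from rfl]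
  rw [Finset.sum_insert (by decide), Finset.sum_insert (by decide), Finset.sum_singleton]
  rw [h0, h1, h2]
  linear_combination 2 * omega_sum

theorem stmt5 :
    ∃ Ω Λ : Finset (Fin 6 → ZMod 3),
      Ω.card = 6 ∧ Λ.card = 6 ∧
      (∀ ξ ∈ Λ, ∀ ξ' ∈ Λ, ξ ≠ ξ' →
        ∑ x ∈ Ω, ω ^ ((∑ j : Fin 6, (ξ j - ξ' j) * x j).val) = 0) ∧
      ¬ Tiles (Ω : Set (Fin 6 → ZMod 3)) := by
  classical
  refine ⟨Finset.univ.image ee, Finset.univ.image M, ?_, ?_, ?_, ?_⟩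
  · rw [Finset.card_image_of_injective _ (by decide : Function.Injective ee)]
    simp
  · rw [Finset.card_image_of_injective _ (by decide : Function.Injective M)]
    simp
  · intro ξ hξ ξ' hξ' hne
    obtain ⟨a, -, rfl⟩ := Finset.mem_image.mp hξ
    obtain ⟨b, -, rfl⟩ := Finset.mem_image.mp hξ'
    have hab : a ≠ b := fun h => hne (by rw [h])
    rw [Finset.sum_image (fun x _ y _ h => (by decide : Function.Injective ee) h)]
    have hsimp : ∀ i : Fin 6, (∑ j : Fin 6, (M a j - M b j) * ee i j)
        = M a i - M b i := by
      intro i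
      simp [ee, mul_ite]
    rw [Finset.sum_congr rfl (fun i _ => by rw [hsimp i])]
    exact sumpow _ (by revert hab; revert a b; decide)
  · rintro ⟨T, hT⟩
    have hfin : T.Finite := Set.toFinite T
    set Tf := hfin.toFinset with hTf
    set Ω : Finset (Fin 6 → ZMod 3) := Finset.univ.image ee with hΩ
    have hcard : (Finset.univ : Finset (Fin 6 → ZMod 3)).card = 729 := by
      simp [Finset.card_univ]
    have hΩcard : Ω.card = 6 := by
      rw [hΩ, Finset.card_image_of_injective _ (by decide : Function.Injective ee)]
      simp
    have hcover : (Finset.univ : Finset (Fin 6 → ZMod 3))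
        = Tf.biUnion (fun t => Ω.image (fun x => t + x)) := by
      apply Finset.ext
      intro g
      simp only [Finset.mem_univ, true_iff, Finset.mem_biUnion, Finset.mem_image,
        Set.Finite.mem_toFinset]
      obtain ⟨t, ⟨htT, htΩ⟩, -⟩ := hT g
      refine ⟨t, hfin.mem_toFinset.mpr htT, g - t, ?_, by ring⟩
      simpa [hΩ] using htΩ
    have hdisj : ∀ t ∈ Tf, ∀ t' ∈ Tf, t ≠ t' →
        Disjoint (Ω.image (fun x => t + x)) (Ω.image (fun x => t' + x)) := by
      intro t ht t' ht' hne
      rw [Finset.disjoint_left]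
      rintro g hg hg'
      obtain ⟨x, hx, rfl⟩ := Finset.mem_image.mp hg
      obtain ⟨x', hx', he⟩ := Finset.mem_image.mp hg'
      obtain ⟨u, -, hu⟩ := hT (t + x)
      have h1 : t = u := hu t ⟨Set.Finite.mem_toFinset hfin |>.mp ht, by
        simpa using hx⟩
      have h2 : t' = u := hu t' ⟨Set.Finite.mem_toFinset hfin |>.mp ht', by
        have : t + x - t' = x' := by rw [← he]; ring
        rw [this]; simpa using hx'⟩
      exact hne (h1.trans h2.symm)
    have := Finset.card_biUnion hdisj
    rw [← hcover, hcard] at this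
    have himg : ∀ t : Fin 6 → ZMod 3, (Ω.image (fun x => t + x)).card = 6 := by
      intro t
      rw [Finset.card_image_of_injective _ (add_right_injective t), hΩcard]
    rw [Finset.sum_congr rfl (fun t _ => himg t), Finset.sum_const, smul_eq_mul] at this
    omega
end

section
/- There exists a 6-element subset Ω ⊆ (ℤ/3ℤ)^5 and a 6-element subset Λ ⊆ (ℤ/3ℤ)^5 such that Σ_{x ∈ Ω} ω^{(ξ-ξ')·x} = 0 for all distinct ξ, ξ' ∈ Λ (ω = e^{2πi/3}), so the exponentials {ω^{ξ·x} : ξ ∈ Λ} form an orthogonal basis of ℓ²(Ω), yet Ω does not tile (ℤ/3ℤ)^5 by translations. -/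
open Complex

lemma omega_prim : IsPrimitiveRoot ω 3 := by
  have := Complex.isPrimitiveRoot_exp 3 (by norm_num)
  simpa [ω] using this

def xv : Fin 6 → (Fin 5 → ZMod 3) :=
  ![![0,0,0,0,0], ![0,1,1,2,2], ![1,0,2,1,2], ![1,2,0,2,1], ![2,1,2,0,1], ![2,2,1,1,0]]

def lv : Fin 6 → (Fin 5 → ZMod 3) :=
  ![![0,0,0,0,0], ![1,0,0,0,0], ![0,1,0,0,0], ![0,0,1,0,0], ![0,0,0,1,0], ![0,0,0,0,1]]

lemma xv_inj : Function.Injective xv := by decide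
lemma lv_inj : Function.Injective lv := by decide

lemma rowdiff : ∀ i i' : Fin 6, i ≠ i' →
    (Finset.univ.val.map
        (fun k : Fin 6 => (∑ j : Fin 5, (lv i j - lv i' j) * xv k j).val))
      = ({0, 0, 1, 1, 2, 2} : Multiset ℕ) := by decide

lemma card_nontile {Ω : Finset (Fin 5 → ZMod 3)} (h : Ω.card = 6) :
    ¬ Tiles (Ω : Set (Fin 5 → ZMod 3)) := by
  rintro ⟨T, hT⟩
  have hbij : Function.Bijective
      (fun p : T × (Ω : Set (Fin 5 → ZMod 3)) => (p.1 : Fin 5 → ZMod 3) + (p.2 : Fin 5 → ZMod 3)) := by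
    constructor
    · rintro ⟨⟨t1, ht1⟩, ⟨x1, hx1⟩⟩ ⟨⟨t2, ht2⟩, ⟨x2, hx2⟩⟩ heq
      simp only [Prod.mk.injEq, Subtype.mk.injEq] at heq ⊢
      obtain ⟨t, _, huniq⟩ := hT (t1 + x1)
      have h1 : t1 = t := huniq t1 ⟨ht1, by simpa using hx1⟩
      have h2 : t2 = t := huniq t2 ⟨ht2, by rw [heq, add_sub_cancel_left]; simpa using hx2⟩
      have ht12 : t1 = t2 := h1.trans h2.symm
      refine ⟨ht12, ?_⟩
      have := heq
      rw [ht12] at this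
      exact add_left_cancel this
    · intro g
      obtain ⟨t, ⟨htT, htΩ⟩, _⟩ := hT g
      exact ⟨⟨⟨t, htT⟩, ⟨g - t, htΩ⟩⟩, by simp⟩
  have hcard := Nat.card_eq_of_bijective _ hbij
  rw [Nat.card_prod] at hcard
  have hΩ : Nat.card (Ω : Set (Fin 5 → ZMod 3)) = 6 := by
    rw [Nat.card_coe_set_eq, Set.ncard_coe_finset, h]
  have hG : Nat.card (Fin 5 → ZMod 3) = 243 := by
    simp [Nat.card_eq_fintype_card]
  rw [hΩ, hG] at hcard
  omega

theorem stmt8 :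
    ∃ Ω Λ : Finset (Fin 5 → ZMod 3),
      Ω.card = 6 ∧ Λ.card = 6 ∧
      (∀ ξ ∈ Λ, ∀ ξ' ∈ Λ, ξ ≠ ξ' →
        ∑ x ∈ Ω, ω ^ ((∑ j : Fin 5, (ξ j - ξ' j) * x j).val) = 0) ∧
      ¬ Tiles (Ω : Set (Fin 5 → ZMod 3)) := by
  refine ⟨Finset.univ.image xv, Finset.univ.image lv, ?_, ?_, ?_, ?_⟩
  · rw [Finset.card_image_of_injective _ xv_inj]; simp
  · rw [Finset.card_image_of_injective _ lv_inj]; simp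
  · intro ξ hξ ξ' hξ' hne
    simp only [Finset.mem_image, Finset.mem_univ, true_and] at hξ hξ'
    obtain ⟨i, rfl⟩ := hξ
    obtain ⟨i', rfl⟩ := hξ'
    have hii : i ≠ i' := fun h => hne (congrArg lv h)
    rw [Finset.sum_image (fun a _ b _ h => xv_inj h), Finset.sum_eq_multiset_sum _ _,
      show (fun k : Fin 6 => ω ^ ((∑ j : Fin 5, (lv i j - lv i' j) * xv k j).val))
        = (fun n : ℕ => ω ^ n) ∘ (fun k : Fin 6 => (∑ j : Fin 5, (lv i j - lv i' j) * xv k j).val)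
        from rfl,
      ← Multiset.map_map, rowdiff i i' hii]
    simp only [Multiset.insert_eq_cons, Multiset.map_cons, Multiset.sum_cons,
      Multiset.map_singleton, Multiset.sum_singleton]
    linear_combination 2 * omega_sum
  · exact card_nontile (by rw [Finset.card_image_of_injective _ xv_inj]; simp)
end

section
/- Let Ω₀ ⊆ {0,1,2}^5 ⊂ ℤ^5 and Λ₀ ⊆ (ℤ/3ℤ)^5 be finite sets of equal cardinality such that Σ_{x ∈ Ω₀} e^{2πi (ξ−ξ')·x/3} = 0 for distinct ξ, ξ' ∈ Λ₀. For M ≥ 1 define Ω₁ = ⋃_{k ∈ [0,M)^5 ∩ ℤ^5} (3k + Ω₀) ⊆ ℤ^5 and Λ₁ = { l/(3M) + ξ/3 mod ℤ^5 : l ∈ [0,M)^5 ∩ ℤ^5, ξ ∈ Λ₀ } ⊆ (ℝ/ℤ)^5. Then for all distinct η, η' ∈ Λ₁, Σ_{x ∈ Ω₁} e^{2πi (η−η')·x} = 0; hence the exponentials indexed by Λ₁ form an orthogonal basis of ℓ²(Ω₁). -/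
/-!
Write a point of `Ω₁` as `x = 3k + y` with `k ∈ [0,M)^5`, `y ∈ Ω₀`, and let `η, η'` have
parameters `(l, ξ)`, `(l', ξ')`. Since `3 (η - η') ≡ (l - l')/M` mod `ℤ^5`, the character sum
over `Ω₁` factors as `(∑_k e((l - l')·k/M)) · (∑_{y ∈ Ω₀} e((η - η')·y))`. If `l ≠ l'`, the
first factor contains the sum of the powers of an `M`-th root of unity `≠ 1`, which vanishes;
if `l = l'`, then `η - η' = (ξ - ξ')/3` and the second factor is the sum assumed to vanish on
`Λ₀`. Orthogonality for distinct parameters also makes `(l, ξ) ↦ η` injective, since a repeated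
point would give `#Ω₁ = 0`; this yields `#Λ₁`.
-/

open Complex

/-- The value `e^{2πi η·x}` for `η ∈ (ℝ/ℤ)^5` and `x ∈ ℤ^5`. -/
noncomputable def eChar (η : Fin 5 → AddCircle (1 : ℝ)) (x : Fin 5 → ℤ) : ℂ :=
  ∏ j : Fin 5, (AddCircle.toCircle ((x j) • η j) : ℂ)

open Finset AddCircle

lemma AddChar.map_sum_eq_prod {ι A M : Type*} [AddCommMonoid A] [CommMonoid M]
    (ψ : AddChar A M) (s : Finset ι) (f : ι → A) : ψ (∑ i ∈ s, f i) = ∏ i ∈ s, ψ (f i) :=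
  map_prod ψ.toMonoidHom (fun i => Multiplicative.ofAdd (f i)) s

lemma AddCircle.sum_Ico_toCircle_zsmul_eq_zero {T : ℝ} (hT : T ≠ 0) {θ : AddCircle T} {M : ℕ}
    (hθ : θ ≠ 0) (hMθ : M • θ = 0) :
    ∑ a ∈ Ico (0 : ℤ) M, (toCircle (a • θ) : ℂ) = 0 := by
  set z : ℂ := (toCircle θ : ℂ)
  have hz : z ≠ 1 := fun h => hθ <| injective_toCircle hT <| by
    rw [toCircle_zero]; exact Circle.ext h
  have hzM : z ^ M = 1 := by
    rw [← Circle.coe_pow, ← toCircle_nsmul, hMθ, toCircle_zero, Circle.coe_one]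
  rw [Int.Ico_eq_finset_map, sum_map]
  simp only [sub_zero, Int.toNat_natCast, Function.Embedding.trans_apply,
    Nat.castEmbedding_apply, addLeftEmbedding_apply, zero_add, natCast_zsmul, toCircle_nsmul,
    Circle.coe_pow]
  rw [geom_sum_eq hz, hzM, sub_self, zero_div]

lemma AddCircle.coe_intCast_div_ne_zero {d : ℤ} {M : ℕ} (hd : d ≠ 0) (hdM : d.natAbs < M) :
    ((d / M : ℝ) : UnitAddCircle) ≠ 0 := by
  rw [Ne, coe_eq_zero_iff]
  rintro ⟨n, hn⟩
  have hM : (M : ℝ) ≠ 0 := Nat.cast_ne_zero.mpr (by omega)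
  have h : d = n * M := by
    rw [zsmul_one, eq_div_iff hM] at hn
    exact_mod_cast hn.symm
  rcases eq_or_ne n 0 with rfl | hn0
  · simp_all
  · have : M ≤ d.natAbs := by
      rw [h, Int.natAbs_mul, Int.natAbs_natCast]
      exact Nat.le_mul_of_pos_left M (Int.natAbs_pos.mpr hn0)
    omega

lemma AddCircle.nsmul_coe_intCast_div {d : ℤ} {M : ℕ} (hM : M ≠ 0) :
    M • ((d / M : ℝ) : UnitAddCircle) = 0 := by
  rw [← coe_nsmul, nsmul_eq_mul, mul_div_cancel₀ _ (Nat.cast_ne_zero.mpr hM), coe_eq_zero_iff]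
  exact ⟨d, by simp⟩

lemma injOn_mul_add {ι : Type*} {b : ℤ} (K D : Finset (ι → ℤ))
    (hD : ∀ y ∈ D, ∀ j, 0 ≤ y j ∧ y j < b) :
    Set.InjOn (fun p : (ι → ℤ) × (ι → ℤ) => fun j => b * p.1 j + p.2 j) ↑(K ×ˢ D) := by
  rintro ⟨k, y⟩ hp ⟨k', y'⟩ hp' h
  simp only [coe_product, Set.mem_prod, mem_coe] at hp hp'
  have hsum (j : ι) : b * k j + y j = b * k' j + y' j := congrFun h j
  have hy : y = y' := funext fun j => by
    obtain ⟨hy0, hyb⟩ := hD y hp.2 j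
    obtain ⟨hy0', hyb'⟩ := hD y' hp'.2 j
    calc y j = (b * k j + y j) % b := by rw [Int.mul_add_emod_self_left, Int.emod_eq_of_lt hy0 hyb]
      _ = (b * k' j + y' j) % b := by rw [hsum]
      _ = y' j := by rw [Int.mul_add_emod_self_left, Int.emod_eq_of_lt hy0' hyb']
  subst hy
  have hk : k = k' := funext fun j => by
    have hb : b ≠ 0 := by have := hD y hp.2 j; omega
    exact mul_left_cancel₀ hb (by linarith [hsum j])
  rw [hk]

lemma eChar_zero_left (x : Fin 5 → ℤ) : eChar 0 x = 1 := by
  simp [eChar]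

lemma eChar_add_right (η : Fin 5 → UnitAddCircle) (x y : Fin 5 → ℤ) :
    eChar η (x + y) = eChar η x * eChar η y := by
  simp only [eChar, Pi.add_apply, add_smul, toCircle_add, Circle.coe_mul, prod_mul_distrib]

lemma eChar_zsmul_right (η : Fin 5 → UnitAddCircle) (n : ℤ) (x : Fin 5 → ℤ) :
    eChar η (n • x) = eChar (n • η) x := by
  simp only [eChar, Pi.smul_apply, smul_eq_mul, mul_comm n, mul_smul]

lemma eChar_toAddCircle {N : ℕ} [NeZero N] (ζ : Fin 5 → ZMod N) (y : Fin 5 → ℤ) :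
    eChar (fun j => ZMod.toAddCircle (ζ j)) y
      = ZMod.stdAddChar (∑ j, ζ j * (y j : ZMod N)) := by
  rw [AddChar.map_sum_eq_prod, eChar]
  refine prod_congr rfl fun j _ => ?_
  rw [← map_zsmul, zsmul_eq_mul, mul_comm]
  rfl

lemma sum_piFinset_Ico_eChar (θ : Fin 5 → UnitAddCircle) (M : ℕ) :
    ∑ k ∈ Fintype.piFinset (fun _ : Fin 5 => Ico (0 : ℤ) M), eChar θ k
      = ∏ j, ∑ a ∈ Ico (0 : ℤ) M, (toCircle (a • θ j) : ℂ) :=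
  (prod_univ_sum (fun _ => Ico (0 : ℤ) M) fun j a => (toCircle (a • θ j) : ℂ)).symm

lemma sum_eChar_image_three_mul_add (θ : Fin 5 → UnitAddCircle) (K Ω₀ : Finset (Fin 5 → ℤ))
    (hΩ₀ : ∀ x ∈ Ω₀, ∀ j, 0 ≤ x j ∧ x j < 3) :
    ∑ x ∈ (K ×ˢ Ω₀).image (fun p j => 3 * p.1 j + p.2 j), eChar θ x
      = (∑ k ∈ K, eChar ((3 : ℤ) • θ) k) * ∑ y ∈ Ω₀, eChar θ y := by
  rw [sum_image (injOn_mul_add K Ω₀ hΩ₀), sum_product, sum_mul_sum]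
  refine sum_congr rfl fun k _ => sum_congr rfl fun y _ => ?_
  rw [← eChar_zsmul_right, ← eChar_add_right]
  rfl

noncomputable def dualPoint (M : ℕ) (p : (Fin 5 → ℤ) × (Fin 5 → ZMod 3)) :
    Fin 5 → UnitAddCircle :=
  fun j => (((p.1 j : ℝ) / (3 * M) + ((p.2 j).val : ℝ) / 3 : ℝ) : AddCircle (1 : ℝ))

lemma dualPoint_apply (M : ℕ) (p : (Fin 5 → ℤ) × (Fin 5 → ZMod 3)) (j : Fin 5) :
    dualPoint M p j
      = (((p.1 j : ℝ) / (3 * M) : ℝ) : UnitAddCircle) + ZMod.toAddCircle (p.2 j) := by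
  rw [dualPoint, ZMod.toAddCircle_apply, AddCircle.coe_add, Nat.cast_ofNat]

lemma three_zsmul_dualPoint (M : ℕ) (p : (Fin 5 → ℤ) × (Fin 5 → ZMod 3)) :
    (3 : ℤ) • dualPoint M p = fun j => (((p.1 j : ℝ) / M : ℝ) : UnitAddCircle) := by
  funext j
  have h3 : (3 : ℤ) • p.2 j = 0 := by
    rw [zsmul_eq_mul, Int.cast_ofNat, show (3 : ZMod 3) = 0 from rfl, zero_mul]
  rw [Pi.smul_apply, dualPoint_apply, smul_add, ← map_zsmul, ← AddCircle.coe_zsmul, h3, map_zero,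
    add_zero, zsmul_eq_mul, Int.cast_ofNat, mul_div_assoc', mul_div_mul_left _ _ three_ne_zero]

lemma dualPoint_sub_of_fst_eq (M : ℕ) {p q : (Fin 5 → ℤ) × (Fin 5 → ZMod 3)}
    (h : p.1 = q.1) :
    dualPoint M p - dualPoint M q = fun j => ZMod.toAddCircle (p.2 j - q.2 j) := by
  funext j
  simp only [Pi.sub_apply, dualPoint_apply, h, map_sub]
  abel

theorem sum_eChar_dualPoint_sub_eq_zero {Ω₀ : Finset (Fin 5 → ℤ)}
    (hΩ₀ : ∀ x ∈ Ω₀, ∀ j, 0 ≤ x j ∧ x j < 3) {Λ₀ : Finset (Fin 5 → ZMod 3)}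
    (horth : ∀ ξ ∈ Λ₀, ∀ ξ' ∈ Λ₀, ξ ≠ ξ' →
      ∑ x ∈ Ω₀, Complex.exp (2 * Real.pi * Complex.I *
        ((∑ j : Fin 5, (ξ j - ξ' j) * (x j : ZMod 3)).val : ℕ) / 3) = 0)
    {M : ℕ} {p q : (Fin 5 → ℤ) × (Fin 5 → ZMod 3)}
    (hp : p ∈ Fintype.piFinset (fun _ : Fin 5 => Ico (0 : ℤ) M) ×ˢ Λ₀)
    (hq : q ∈ Fintype.piFinset (fun _ : Fin 5 => Ico (0 : ℤ) M) ×ˢ Λ₀) (hpq : p ≠ q) :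
    ∑ x ∈ (Fintype.piFinset (fun _ : Fin 5 => Ico (0 : ℤ) M) ×ˢ Ω₀).image
      (fun p j => 3 * p.1 j + p.2 j), eChar (dualPoint M p - dualPoint M q) x = 0 := by
  rw [sum_eChar_image_three_mul_add _ _ _ hΩ₀]
  simp only [mem_product, Fintype.mem_piFinset, mem_Ico] at hp hq
  by_cases hl : p.1 = q.1
  · refine mul_eq_zero_of_right _ ?_
    have hξ : p.2 ≠ q.2 := fun hξ => hpq (Prod.ext hl hξ)
    rw [dualPoint_sub_of_fst_eq M hl, ← horth p.2 hp.2 q.2 hq.2 hξ]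
    refine sum_congr rfl fun y _ => ?_
    rw [eChar_toAddCircle, ZMod.stdAddChar_apply, ZMod.toCircle_apply, Nat.cast_ofNat]
  · refine mul_eq_zero_of_left ?_ _
    obtain ⟨j, hj⟩ := Function.ne_iff.mp hl
    rw [smul_sub, three_zsmul_dualPoint, three_zsmul_dualPoint, sum_piFinset_Ico_eChar]
    refine prod_eq_zero (mem_univ j) ?_
    have hpj := hp.1 j
    have hqj := hq.1 j
    simp only [Pi.sub_apply, ← AddCircle.coe_sub, ← sub_div, ← Int.cast_sub]
    exact sum_Ico_toCircle_zsmul_eq_zero one_ne_zero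
      (coe_intCast_div_ne_zero (sub_ne_zero.mpr hj) (by omega)) (nsmul_coe_intCast_div (by omega))

lemma injOn_of_sum_eChar_sub_eq_zero {α : Type*} {S : Set α} {η : α → Fin 5 → UnitAddCircle}
    {Ω : Finset (Fin 5 → ℤ)} (hΩ : Ω.Nonempty)
    (horth : ∀ p ∈ S, ∀ q ∈ S, p ≠ q → ∑ x ∈ Ω, eChar (η p - η q) x = 0) :
    Set.InjOn η S := by
  intro p hp q hq hpq
  by_contra hne
  have h := horth p hp q hq hne
  simp only [hpq, sub_self, eChar_zero_left, sum_const, nsmul_eq_mul, mul_one, Nat.cast_eq_zero,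
    card_eq_zero] at h
  exact hΩ.ne_empty h

theorem stmt11 (Ω₀ : Finset (Fin 5 → ℤ))
    (hΩ₀ : ∀ x ∈ Ω₀, ∀ j, 0 ≤ x j ∧ x j < 3)
    (Λ₀ : Finset (Fin 5 → ZMod 3)) (hcard : Λ₀.card = Ω₀.card)
    (horth : ∀ ξ ∈ Λ₀, ∀ ξ' ∈ Λ₀, ξ ≠ ξ' →
      ∑ x ∈ Ω₀, Complex.exp (2 * Real.pi * Complex.I *
        ((∑ j : Fin 5, (ξ j - ξ' j) * (x j : ZMod 3)).val : ℕ) / 3) = 0)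
    (M : ℕ)
    (Ω₁ : Finset (Fin 5 → ℤ))
    (hΩ₁ : Ω₁ = ((Fintype.piFinset fun _ : Fin 5 => Finset.Ico (0 : ℤ) M) ×ˢ Ω₀).image
      (fun p j => 3 * p.1 j + p.2 j))
    (Λ₁ : Finset (Fin 5 → AddCircle (1 : ℝ)))
    (hΛ₁ : Λ₁ = ((Fintype.piFinset fun _ : Fin 5 => Finset.Ico (0 : ℤ) M) ×ˢ Λ₀).image
      (fun p j => (((p.1 j : ℝ) / (3 * M) + ((p.2 j).val : ℝ) / 3 : ℝ) : AddCircle (1 : ℝ)))) :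
    Ω₁.card = M ^ 5 * Ω₀.card ∧ Λ₁.card = M ^ 5 * Ω₀.card ∧
    ∀ η ∈ Λ₁, ∀ η' ∈ Λ₁, η ≠ η' →
      ∑ x ∈ Ω₁, eChar (η - η') x = 0 := by
  set K := Fintype.piFinset fun _ : Fin 5 => Ico (0 : ℤ) M
  have hK : K.card = M ^ 5 := by simp [K]
  have hΛ₁ : Λ₁ = (K ×ˢ Λ₀).image (dualPoint M) := hΛ₁
  have hΩ₁card : Ω₁.card = M ^ 5 * Ω₀.card := by
    rw [hΩ₁, card_image_of_injOn (injOn_mul_add K Ω₀ hΩ₀), card_product, hK]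
  have horth₁ : ∀ p ∈ K ×ˢ Λ₀, ∀ q ∈ K ×ˢ Λ₀, p ≠ q →
      ∑ x ∈ Ω₁, eChar (dualPoint M p - dualPoint M q) x = 0 := fun p hp q hq hpq =>
    hΩ₁ ▸ sum_eChar_dualPoint_sub_eq_zero hΩ₀ horth hp hq hpq
  have hinj : Set.InjOn (dualPoint M) ↑(K ×ˢ Λ₀) := by
    rcases (K ×ˢ Λ₀).eq_empty_or_nonempty with h | ⟨p, hp⟩
    · simp [h]
    · refine injOn_of_sum_eChar_sub_eq_zero ?_ horth₁
      rw [← card_pos, hΩ₁card, ← hcard, ← hK, ← card_product]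
      exact card_pos.mpr ⟨p, hp⟩
  refine ⟨hΩ₁card, ?_, ?_⟩
  · rw [hΛ₁, card_image_of_injOn hinj, card_product, hK, hcard]
  · rw [hΛ₁]
    rintro _ hη _ hη' hne
    obtain ⟨p, hp, rfl⟩ := mem_image.mp hη
    obtain ⟨q, hq, rfl⟩ := mem_image.mp hη'
    exact horth₁ p hp q hq (ne_of_apply_ne _ hne)
end

section
/- For integers M ≥ 1: if d is a positive integer with d ∤ 3^n, then there is no way to write L^n as a sum of finitely many terms each of the form d·L^n/3^n + O(L^{n−1}) or 0, for all sufficiently large L; consequently, a set whose translates each intersect every large cube x₀+[0,L)^n in either 0 or (d/3^n + O(1/L))·L^n points cannot tile ℤ^n when d ∤ 3^n. -/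
/-!
Dividing by `L ^ (n - 1)` turns the hypothesis into `L * |3 ^ n - m * d| ≤ C * m * 3 ^ n`.
Since `d ∤ 3 ^ n`, the integer `3 ^ n - m * d` is nonzero, so `L ≤ C * m * 3 ^ n`; and once `L` is
large compared with `C * 3 ^ n`, the same inequality forces `m ≤ 2 * 3 ^ n`. Together these bound
`L` by `2 * C * 9 ^ n`.
-/

lemma one_le_abs_natCast_sub_mul_of_not_dvd {a d : ℕ} (h : ¬ d ∣ a) (m : ℕ) :
    1 ≤ |(a : ℝ) - m * d| := by
  have hne : (a : ℤ) - m * d ≠ 0 := by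
    intro h0
    exact h ⟨m, by rw [mul_comm]; exact_mod_cast (sub_eq_zero.mp h0)⟩
  exact_mod_cast Int.one_le_abs hne

lemma mul_abs_sub_le_of_abs_pow_sub_le {n : ℕ} (hn : 1 ≤ n) {x T k c : ℝ} (hx : 0 < x)
    (hT : 0 < T) (h : |x ^ n - k * x ^ n / T| ≤ c * x ^ (n - 1)) :
    x * |T - k| ≤ c * T := by
  have hfac : x ^ n - k * x ^ n / T = x ^ (n - 1) * (x * (T - k) / T) := by
    rw [← pow_sub_one_mul (by omega : n ≠ 0)]
    field_simp
  rw [hfac, abs_mul, abs_of_pos (pow_pos hx _), mul_comm c, abs_div, abs_mul, abs_of_pos hx,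
    abs_of_pos hT] at h
  have := le_of_mul_le_mul_left h (pow_pos hx _)
  rwa [div_le_iff₀ hT] at this

section

variable {x T C m d : ℝ}

lemma le_two_mul_of_mul_abs_sub_le (hd : 1 ≤ d) (hm : 0 ≤ m) (hx : 2 * C * T ≤ x)
    (hx0 : 0 < x) (h : x * |T - m * d| ≤ C * m * T) : m ≤ 2 * T := by
  have hmd : x * (m * d - T) ≤ C * m * T :=
    le_trans (mul_le_mul_of_nonneg_left (by rw [abs_sub_comm]; exact le_abs_self _) hx0.le) h
  have hCm : C * m * T ≤ x * m / 2 := by nlinarith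
  nlinarith [mul_le_mul_of_nonneg_left hd (mul_nonneg hx0.le hm)]

lemma le_two_mul_sq_of_mul_abs_sub_le (hC : 0 ≤ C) (hT : 0 < T) (hd : 1 ≤ d) (hm : 0 ≤ m)
    (hx : 2 * C * T ≤ x) (hx0 : 0 < x) (hgap : 1 ≤ |T - m * d|)
    (h : x * |T - m * d| ≤ C * m * T) : x ≤ 2 * C * T ^ 2 :=
  calc x ≤ x * |T - m * d| := le_mul_of_one_le_right hx0.le hgap
    _ ≤ C * m * T := h
    _ ≤ C * (2 * T) * T := by gcongr; exact le_two_mul_of_mul_abs_sub_le hd hm hx hx0 h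
    _ = 2 * C * T ^ 2 := by ring

end

theorem stmt17 (n : ℕ) (hn : 1 ≤ n) (d : ℕ) (hd : 0 < d) (hdvd : ¬ d ∣ 3 ^ n)
    (C : ℝ) (hC : 0 < C) :
    ∃ L₀ : ℕ, ∀ L : ℕ, L₀ ≤ L →
      ¬ ∃ m : ℕ, |(L : ℝ) ^ n - m * d * (L : ℝ) ^ n / 3 ^ n| ≤ C * m * (L : ℝ) ^ (n - 1) := by
  set T : ℝ := 3 ^ n
  have hT : 1 ≤ T := one_le_pow₀ (by norm_num)
  refine ⟨⌈2 * C * T ^ 2⌉₊ + 1, fun L hL ⟨m, hm⟩ => ?_⟩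
  have hL : 2 * C * T ^ 2 < L := Nat.lt_of_ceil_lt hL
  have hL0 : (0 : ℝ) < L := lt_of_le_of_lt (by positivity) hL
  have hgap : 1 ≤ |T - m * d| := by
    simpa [T] using one_le_abs_natCast_sub_mul_of_not_dvd hdvd m
  have hred : (L : ℝ) * |T - m * d| ≤ C * m * T :=
    mul_abs_sub_le_of_abs_pow_sub_le hn hL0 (by positivity) (by simpa [mul_assoc] using hm)
  have hCT : 2 * C * T ≤ L := by nlinarith
  exact hL.not_ge (le_two_mul_sq_of_mul_abs_sub_le hC.le (by positivity) (by exact_mod_cast hd)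
    m.cast_nonneg hCT hL0 hgap hred)
end
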